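/- (Lemma: expansion of the order-flow regularized model in terms of the price regularized model.) Let Λ be a cross-impact model which is split-invariant and rotation-invariant, let (Σ,Ω,R) be a triple in its domain, let V be a linear subspace of ℝⁿ, and let ε > 0. Then Λ(Σ^q_ε, Ω^q_ε, R^q_ε) = Π̄_V Λ(Σ^p_ε, Ω^p_ε, R^p_ε) Π̄_V + ε⁻¹ [ Π̄_V Λ(Σ^p_ε, Ω^p_ε, R^p_ε) Π_V + Π_V Λ(Σ^p_ε, Ω^p_ε, R^p_ε) Π̄_V ] + ε⁻² Π_V Λ(Σ^p_ε, Ω^p_ε, R^p_ε) Π_V. -/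

import Mathlib

open Matrix
open scoped Classical

/-- `sqrtm A` is the unique symmetric positive semidefinite square root of a
symmetric positive semidefinite real matrix `A` (junk value `0` otherwise). -/
noncomputable def sqrtm {n : ℕ} (A : Matrix (Fin n) (Fin n) ℝ) : Matrix (Fin n) (Fin n) ℝ :=
  if h : A.PosSemidef then (h.1.eigenvectorUnitary : Matrix (Fin n) (Fin n) ℝ) *
    diagonal ((↑) ∘ Real.sqrt ∘ h.1.eigenvalues) * (star h.1.eigenvectorUnitary : Matrix (Fin n) (Fin n) ℝ) else 0

/-- The Kyle cross-impact matrix `Λ_kyle(Σ,Ω) = (√Ω)⁻¹ √(√Ω Σ √Ω) (√Ω)⁻¹`. -/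
noncomputable def kyle {n : ℕ} (S W : Matrix (Fin n) (Fin n) ℝ) : Matrix (Fin n) (Fin n) ℝ :=
  (sqrtm W)⁻¹ * sqrtm (sqrtm W * S * sqrtm W) * (sqrtm W)⁻¹

/-- The matrix of the orthogonal projection of `ℝⁿ` (with the standard inner product)
onto the linear subspace `V`. -/
noncomputable def projMat {n : ℕ} (V : Submodule ℝ (EuclideanSpace ℝ (Fin n))) :
    Matrix (Fin n) (Fin n) ℝ :=
  LinearMap.toMatrix' ((EuclideanSpace.equiv (Fin n) ℝ).toLinearMap ∘ₗ V.subtype ∘ₗ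
    (V.orthogonalProjectionOnto).toLinearMap ∘ₗ ((EuclideanSpace.equiv (Fin n) ℝ).symm.toLinearMap))

/-- The regularizing matrix `Π̄_V + ε Π_V`. -/
noncomputable def reg {n : ℕ} (V : Submodule ℝ (EuclideanSpace ℝ (Fin n))) (ε : ℝ) :
    Matrix (Fin n) (Fin n) ℝ :=
  (1 - projMat V) + ε • projMat V

/-!
Split and rotation invariance combine into covariance under every positive definite change
`M` of order-flow coordinates, `Λ(M⁻¹ΣM⁻¹, MΩM, M⁻¹RM) = M⁻¹ Λ(Σ,Ω,R) M⁻¹`: diagonalise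
`M = U D Uᵀ` and compose a rotation by `Uᵀ`, a split by `D` and a rotation by `U`.
For `M = Π̄_V + εΠ_V` this carries the price regularized statistics to the order-flow
regularized ones, and `M⁻¹ = Π̄_V + ε⁻¹Π_V` because `Π_V` is idempotent; expanding
`M⁻¹ Λ M⁻¹` gives the three terms.
-/

section Projection

variable {n : ℕ}

local notation "toCLM" => toEuclideanCLM (n := Fin n) (𝕜 := ℝ)

theorem toEuclideanCLM_projMat (V : Submodule ℝ (EuclideanSpace ℝ (Fin n))) :
    toCLM (projMat V) = V.starProjection := by
  ext x i
  simp [projMat, EuclideanSpace.equiv]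

theorem isStarProjection_projMat (V : Submodule ℝ (EuclideanSpace ℝ (Fin n))) :
    IsStarProjection (projMat V) := by
  have h := isStarProjection_starProjection (U := V)
  rw [← toEuclideanCLM_projMat] at h
  refine ⟨EquivLike.injective toCLM ?_, EquivLike.injective toCLM ?_⟩
  · rw [map_mul]; exact h.isIdempotentElem.eq
  · rw [map_star]; exact h.isSelfAdjoint.star_eq

end Projection

section RealAlgebra

variable {A : Type*} [Ring A] [Algebra ℝ A]

theorem add_smul_mul_mul_add_smul (q p x : A) (a : ℝ) :
    (q + a • p) * x * (q + a • p)
      = q * x * q + a • (q * x * p + p * x * q) + a ^ 2 • (p * x * p) := by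
  simp only [add_mul, mul_add, smul_mul_assoc, mul_smul_comm, smul_smul, smul_add, sq]
  abel

theorem IsIdempotentElem.one_sub_add_smul_mul {p : A} (hp : IsIdempotentElem p) (a b : ℝ) :
    (1 - p + a • p) * (1 - p + b • p) = 1 - p + (a * b) • p := by
  simp only [sub_mul, mul_sub, add_mul, mul_add, one_mul, mul_one, smul_mul_assoc,
    mul_smul_comm, hp.eq]
  module

end RealAlgebra

section Regularization

variable {n : ℕ} (V : Submodule ℝ (EuclideanSpace ℝ (Fin n)))

theorem reg_mul_reg (a b : ℝ) : reg V a * reg V b = reg V (a * b) :=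
  (isStarProjection_projMat V).isIdempotentElem.one_sub_add_smul_mul a b

theorem reg_one : reg V 1 = 1 := by
  simp [reg]

theorem inv_reg {a : ℝ} (ha : a ≠ 0) : (reg V a)⁻¹ = reg V a⁻¹ :=
  inv_eq_right_inv (by rw [reg_mul_reg, mul_inv_cancel₀ ha, reg_one])

theorem isSelfAdjoint_reg (a : ℝ) : IsSelfAdjoint (reg V a) :=
  have hP := (isStarProjection_projMat V).isSelfAdjoint
  ((IsSelfAdjoint.one _).sub hP).add ((IsSelfAdjoint.all a).smul hP)

theorem transpose_reg (a : ℝ) : (reg V a)ᵀ = reg V a := by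
  rw [← conjTranspose_eq_transpose_of_trivial, ← star_eq_conjTranspose,
    (isSelfAdjoint_reg V a).star_eq]

theorem reg_posDef {a : ℝ} (ha : 0 < a) : (reg V a).PosDef := by
  have hunit : IsUnit (reg V √a) :=
    (isUnit_iff_isUnit_det _).2 <| isUnit_det_of_right_inverse <| by
      rw [reg_mul_reg, mul_inv_cancel₀ (by positivity), reg_one]
  have h := PosDef.conjTranspose_mul_self _ (mulVec_injective_iff_isUnit.2 hunit)
  rwa [← star_eq_conjTranspose, (isSelfAdjoint_reg V _).star_eq, reg_mul_reg,
    Real.mul_self_sqrt ha.le] at h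

end Regularization

section CrossImpact

variable {ι : Type*} [Fintype ι] [DecidableEq ι]
  (Λ : Matrix ι ι ℝ → Matrix ι ι ℝ → Matrix ι ι ℝ → Matrix ι ι ℝ)

def IsSplitInvariant : Prop :=
  ∀ S W R : Matrix ι ι ℝ, S.PosSemidef → W.PosDef → ∀ d : ι → ℝ, (∀ i, 0 < d i) →
    Λ ((diagonal d)⁻¹ * S * (diagonal d)⁻¹) (diagonal d * W * diagonal d)
      ((diagonal d)⁻¹ * R * diagonal d)
      = (diagonal d)⁻¹ * Λ S W R * (diagonal d)⁻¹

def IsRotationInvariant : Prop :=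
  ∀ S W R : Matrix ι ι ℝ, S.PosSemidef → W.PosDef → ∀ O : Matrix ι ι ℝ, O * Oᵀ = 1 →
    Λ (O * S * Oᵀ) (O * W * Oᵀ) (O * R * Oᵀ) = O * Λ S W R * Oᵀ

/-- Order flows change coordinates by `M` and prices by `N` (in practice `N = (Mᵀ)⁻¹`). -/
def IsCovariantUnder (M N : Matrix ι ι ℝ) : Prop :=
  ∀ S W R : Matrix ι ι ℝ, S.PosSemidef → W.PosDef →
    Λ (N * S * Nᵀ) (M * W * Mᵀ) (N * R * Mᵀ) = N * Λ S W R * Nᵀ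

variable {Λ}

theorem IsCovariantUnder.mul {M₁ N₁ M₂ N₂ : Matrix ι ι ℝ} (h₁ : IsCovariantUnder Λ M₁ N₁)
    (h₂ : IsCovariantUnder Λ M₂ N₂) (hM₂ : IsUnit M₂) :
    IsCovariantUnder Λ (M₁ * M₂) (N₁ * N₂) := by
  intro S W R hS hW
  have hS₂ : (N₂ * S * N₂ᵀ).PosSemidef := by
    simpa only [conjTranspose_eq_transpose_of_trivial] using hS.mul_mul_conjTranspose_same N₂
  have hW₂ : (M₂ * W * M₂ᵀ).PosDef := by
    simpa only [conjTranspose_eq_transpose_of_trivial] using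
      hW.mul_mul_conjTranspose_same (vecMul_injective_iff_isUnit.2 hM₂)
  have h := h₁ _ _ (N₂ * R * M₂ᵀ) hS₂ hW₂
  rw [h₂ S W R hS hW] at h
  simpa only [transpose_mul, Matrix.mul_assoc] using h

theorem IsRotationInvariant.isCovariantUnder (h : IsRotationInvariant Λ) {O : Matrix ι ι ℝ}
    (hO : O * Oᵀ = 1) : IsCovariantUnder Λ O O :=
  fun S W R hS hW => h S W R hS hW O hO

theorem IsSplitInvariant.isCovariantUnder_diagonal (h : IsSplitInvariant Λ) {d : ι → ℝ}
    (hd : ∀ i, 0 < d i) : IsCovariantUnder Λ (diagonal d) (diagonal d)⁻¹ := by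
  intro S W R hS hW
  simpa only [transpose_nonsing_inv, diagonal_transpose] using h S W R hS hW d hd

theorem isCovariantUnder_of_posDef (hsplit : IsSplitInvariant Λ) (hrot : IsRotationInvariant Λ)
    {M : Matrix ι ι ℝ} (hM : M.PosDef) : IsCovariantUnder Λ M M⁻¹ := by
  set U : Matrix ι ι ℝ := (hM.1.eigenvectorUnitary : Matrix ι ι ℝ)
  set D : Matrix ι ι ℝ := diagonal hM.1.eigenvalues
  have hUUt : U * Uᵀ = 1 := by
    simpa [U, star_eq_conjTranspose] using Unitary.coe_mul_star_self hM.1.eigenvectorUnitary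
  have hUtU : Uᵀ * U = 1 := by
    simpa [U, star_eq_conjTranspose] using Unitary.coe_star_mul_self hM.1.eigenvectorUnitary
  have hD : IsUnit D := (isUnit_iff_isUnit_det _).2 <| by
    simpa [D, det_diagonal, isUnit_iff_ne_zero, Finset.prod_ne_zero_iff] using
      fun i => (hM.eigenvalues_pos i).ne'
  have hMeq : M = U * D * Uᵀ := by
    simpa [U, D, Unitary.conjStarAlgAut_apply, star_eq_conjTranspose] using hM.1.spectral_theorem
  have hMinv : M⁻¹ = U * D⁻¹ * Uᵀ := by
    rw [hMeq, Matrix.mul_inv_rev, Matrix.mul_inv_rev, inv_eq_right_inv hUUt,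
      inv_eq_right_inv hUtU, Matrix.mul_assoc]
  rw [hMinv, hMeq]
  have hUt : IsCovariantUnder Λ Uᵀ Uᵀ := hrot.isCovariantUnder (by rwa [transpose_transpose])
  exact ((hrot.isCovariantUnder hUUt).mul (hsplit.isCovariantUnder_diagonal hM.eigenvalues_pos)
    hD).mul hUt ((isUnit_iff_isUnit_det _).2 (isUnit_det_of_right_inverse hUtU))

theorem IsCovariantUnder.apply_mul_mul_self_eq {M : Matrix ι ι ℝ}
    (h : IsCovariantUnder Λ M M⁻¹) (hM : IsUnit M) (hMt : Mᵀ = M) {S W R : Matrix ι ι ℝ}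
    (hS : S.PosSemidef) (hW : W.PosDef) :
    Λ S (M * W * M) (R * M) = M⁻¹ * Λ (M * S * M) W (M * R) * M⁻¹ := by
  have hdet : IsUnit M.det := (isUnit_iff_isUnit_det M).1 hM
  have hMSM : (M * S * M).PosSemidef := by
    simpa only [conjTranspose_eq_transpose_of_trivial, hMt] using hS.mul_mul_conjTranspose_same M
  simpa only [transpose_nonsing_inv, hMt, ← Matrix.mul_assoc, nonsing_inv_mul _ hdet,
    Matrix.one_mul, mul_nonsing_inv_cancel_right _ _ hdet] using h (M * S * M) W (M * R) hMSM hW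

end CrossImpact

/-- expansion of the order-flow regularized model in terms of the
price regularized model. -/
theorem expansion_fragmentation_liquidity {n : ℕ}
    (Λ : Matrix (Fin n) (Fin n) ℝ → Matrix (Fin n) (Fin n) ℝ → Matrix (Fin n) (Fin n) ℝ → Matrix (Fin n) (Fin n) ℝ)
    (hsplit : ∀ S W R : Matrix (Fin n) (Fin n) ℝ, S.PosSemidef → W.PosDef → ∀ d : Fin n → ℝ, (∀ i, 0 < d i) →
      Λ ((diagonal d)⁻¹ * S * (diagonal d)⁻¹) (diagonal d * W * diagonal d)
        ((diagonal d)⁻¹ * R * diagonal d)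
        = (diagonal d)⁻¹ * Λ S W R * (diagonal d)⁻¹)
    (hrot : ∀ S W R : Matrix (Fin n) (Fin n) ℝ, S.PosSemidef → W.PosDef → ∀ O : Matrix (Fin n) (Fin n) ℝ, O * Oᵀ = 1 →
      Λ (O * S * Oᵀ) (O * W * Oᵀ) (O * R * Oᵀ) = O * Λ S W R * Oᵀ)
    (S W R : Matrix (Fin n) (Fin n) ℝ) (hS : S.PosSemidef) (hW : W.PosDef)
    (V : Submodule ℝ (EuclideanSpace ℝ (Fin n))) (ε : ℝ) (hε : 0 < ε) :
    Λ S (reg V ε * W * reg V ε) (R * reg V ε)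
      = (1 - projMat V) * Λ (reg V ε * S * reg V ε) W (reg V ε * R) * (1 - projMat V)
        + ε⁻¹ • ((1 - projMat V) * Λ (reg V ε * S * reg V ε) W (reg V ε * R) * projMat V
            + projMat V * Λ (reg V ε * S * reg V ε) W (reg V ε * R) * (1 - projMat V))
        + (ε ^ 2)⁻¹ • (projMat V * Λ (reg V ε * S * reg V ε) W (reg V ε * R) * projMat V) := by
  have hM := reg_posDef V hε
  rw [(isCovariantUnder_of_posDef hsplit hrot hM).apply_mul_mul_self_eq hM.isUnit
    (transpose_reg V ε) hS hW, inv_reg V hε.ne', reg, add_smul_mul_mul_add_smul, inv_pow]
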